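/- Contraposition holds in BD_∘: for all formulas φ, χ in the language over {¬, ∧, ∨, ∘}, φ ⊨_BD χ if and only if ¬χ ⊨_BD ¬φ. -/
import Mathlib


inductive FV | T | B | N | F
deriving DecidableEq

open FV

def fneg : FV → FV
  | T => F | F => T | B => B | N => N

def fand : FV → FV → FV
  | T, x => x
  | x, T => x
  | F, _ => F
  | _, F => F
  | B, B => B
  | N, N => N
  | B, N => F
  | N, B => F

def forr : FV → FV → FV
  | F, x => x
  | x, F => x
  | T, _ => T
  | _, T => T
  | B, B => B
  | N, N => N
  | B, N => T
  | N, B => T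

def fcirc : FV → FV
  | T => T | F => T | B => F | N => F

def ftri : FV → FV
  | T => T | B => T | N => F | F => F

inductive Fm
  | var : ℕ → Fm
  | neg : Fm → Fm
  | conj : Fm → Fm → Fm
  | disj : Fm → Fm → Fm
  | circ : Fm → Fm
  | tri : Fm → Fm

def eval (v : ℕ → FV) : Fm → FV
  | .var p => v p
  | .neg φ => fneg (eval v φ)
  | .conj φ χ => fand (eval v φ) (eval v χ)
  | .disj φ χ => forr (eval v φ) (eval v χ)
  | .circ φ => fcirc (eval v φ)
  | .tri φ => ftri (eval v φ)

/-- designated values -/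
def desig (x : FV) : Prop := x = T ∨ x = B

/-- formulas over {¬,∧,∨} -/
def isBD : Fm → Prop
  | .var _ => True
  | .neg φ => isBD φ
  | .conj φ χ => isBD φ ∧ isBD χ
  | .disj φ χ => isBD φ ∧ isBD χ
  | .circ _ => False
  | .tri _ => False

/-- formulas over {¬,∧,∨,∘} -/
def isCircFm : Fm → Prop
  | .var _ => True
  | .neg φ => isCircFm φ
  | .conj φ χ => isCircFm φ ∧ isCircFm χ
  | .disj φ χ => isCircFm φ ∧ isCircFm χ
  | .circ φ => isCircFm φ
  | .tri _ => False

/-- formulas over {¬,∧,∨,△} -/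
def isTriFm : Fm → Prop
  | .var _ => True
  | .neg φ => isTriFm φ
  | .conj φ χ => isTriFm φ ∧ isTriFm χ
  | .disj φ χ => isTriFm φ ∧ isTriFm χ
  | .circ _ => False
  | .tri φ => isTriFm φ

/-- BD entailment between single formulas -/
def ent (φ χ : Fm) : Prop := ∀ v, desig (eval v φ) → desig (eval v χ)

/-- classical (two-valued) evaluation of {¬,∧,∨}-formulas -/
def evalC (b : ℕ → Bool) : Fm → Bool
  | .var p => b p
  | .neg φ => !(evalC b φ)
  | .conj φ χ => evalC b φ && evalC b χ
  | .disj φ χ => evalC b φ || evalC b χ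
  | .circ φ => evalC b φ
  | .tri φ => evalC b φ


def sw : FV → FV
  | T => T | F => F | B => N | N => B

lemma eval_sw (v : ℕ → FV) : ∀ φ, isCircFm φ → eval (sw ∘ v) φ = sw (eval v φ) := by
  intro φ h
  induction φ with
  | var p => rfl
  | neg ψ ih =>
      simp only [eval, ih h]
      cases eval v ψ <;> rfl
  | conj ψ ξ ih1 ih2 =>
      simp only [eval, ih1 h.1, ih2 h.2]
      cases eval v ψ <;> cases eval v ξ <;> rfl
  | disj ψ ξ ih1 ih2 =>
      simp only [eval, ih1 h.1, ih2 h.2]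
      cases eval v ψ <;> cases eval v ξ <;> rfl
  | circ ψ ih =>
      simp only [eval, ih h]
      cases eval v ψ <;> rfl
  | tri ψ ih => exact absurd h id

lemma contra_dir (φ χ : Fm) (hφ : isCircFm φ) (hχ : isCircFm χ) :
    ent φ χ → ent (.neg χ) (.neg φ) := by
  intro h v hv
  by_contra hc
  have hφd : desig (eval (sw ∘ v) φ) := by
    rw [eval_sw v φ hφ]
    simp only [desig, eval] at hc ⊢
    cases hx : eval v φ <;> simp [hx, sw] at hc ⊢ <;> tauto
  have := h (sw ∘ v) hφd
  rw [eval_sw v χ hχ] at this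
  simp only [desig, eval] at hv this
  cases hy : eval v χ <;> simp [hy, sw, fneg] at hv this

theorem contraposition_circ (φ χ : Fm) (hφ : isCircFm φ) (hχ : isCircFm χ) :
    ent φ χ ↔ ent (.neg χ) (.neg φ) := by
  constructor
  · exact contra_dir φ χ hφ hχ
  · intro h v hv
    have := contra_dir (Fm.neg χ) (Fm.neg φ) hχ hφ h v
    simp only [desig, eval] at this hv ⊢
    cases hx : eval v φ <;> cases hy : eval v χ <;>
      simp [hx, hy, fneg] at this hv ⊢ <;> tauto
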